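/- For every γ ∈ (0,1) there exists an integer K₁ ≥ 2 (depending only on γ) such that for all integers k ≥ K₁ the quantity H_k = −(2γ(k−2)/(k+3γ−2)) · { k^{γ−1}((k−1)^γ + 2γ k^{γ−1}) − (k−1)^{γ−1}(k−2)^{γ−1}(k+3γ−2) } satisfies H_k ≥ 0 and H_{k+1} ≤ H_k. -/

import Mathlib

/-!
Put u = 1/k. Factoring k out of k - 1, k - 2 and k + 3γ - 2 gives H_k = u^(1-2γ) Q(u), where
Q = `coeffHProfile γ` is smooth near 0 with Q(0) = 0 and Q'(0) = 2γ(1-γ) > 0; this is the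
expansion H_k ≈ 2γ(1-γ) k^(2γ-2). For p > -1 the derivative of u^p Q(u) is
u^p (Q'(u) + p Q(u)/u), whose bracket tends to (1+p) Q'(0) > 0 as u → 0⁺. Hence
u^(1-2γ) Q(u) is positive and strictly increasing on some (0, δ), that is, H_k is positive and
strictly decreasing once 1/k < δ.
-/

open Set Filter Topology

/-- The coefficient H_k of the distance-square term in the discrete Lyapunov
function for underdamped NAG. -/
noncomputable def coeffH (γ : ℝ) (k : ℕ) : ℝ :=
  -(2 * γ * ((k : ℝ) - 2) / ((k : ℝ) + 3 * γ - 2)) *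
    ((k : ℝ) ^ (γ - 1) * (((k : ℝ) - 1) ^ γ + 2 * γ * (k : ℝ) ^ (γ - 1)) -
      ((k : ℝ) - 1) ^ (γ - 1) * ((k : ℝ) - 2) ^ (γ - 1) * ((k : ℝ) + 3 * γ - 2))

theorem tendsto_div_self_nhdsGT_of_hasDerivAt {Q : ℝ → ℝ} {c : ℝ} (hQ0 : Q 0 = 0)
    (hQ : HasDerivAt Q c 0) : Tendsto (fun u => Q u / u) (𝓝[>] 0) (𝓝 c) := by
  simpa [hQ0, div_eq_inv_mul] using hQ.tendsto_slope_zero_right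

theorem hasDerivAt_mul_rpow {Q : ℝ → ℝ} {q p u : ℝ} (hu : 0 < u) (hQ : HasDerivAt Q q u) :
    HasDerivAt (fun u => Q u * u ^ p) (u ^ p * (q + p * (Q u / u))) u := by
  refine (hQ.mul (Real.hasDerivAt_rpow_const (p := p) (Or.inl hu.ne'))).congr_deriv ?_
  rw [Real.rpow_sub_one hu.ne']
  ring

theorem exists_strictMonoOn_mul_rpow {Q : ℝ → ℝ} {p : ℝ} (hp : -1 < p)
    (hQ : ContDiffAt ℝ 1 Q 0) (hQ0 : Q 0 = 0) (hQ' : 0 < deriv Q 0) :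
    ∃ δ > 0, (∀ u ∈ Ioo 0 δ, 0 < Q u * u ^ p) ∧
      StrictMonoOn (fun u => Q u * u ^ p) (Ioo 0 δ) := by
  have hslope := tendsto_div_self_nhdsGT_of_hasDerivAt hQ0
    (hQ.differentiableAt one_ne_zero).hasDerivAt
  have hderiv : Tendsto (deriv Q) (𝓝[>] 0) (𝓝 (deriv Q 0)) :=
    ((hQ.derivWithin (m := 0) le_rfl).continuousAt).tendsto.mono_left nhdsWithin_le_nhds
  have hbracket : Tendsto (fun u => deriv Q u + p * (Q u / u)) (𝓝[>] 0)
      (𝓝 ((1 + p) * deriv Q 0)) := by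
    convert hderiv.add (hslope.const_mul p) using 2
    ring
  have hQdiff : ∀ᶠ u in 𝓝[>] 0, DifferentiableAt ℝ Q u :=
    nhdsWithin_le_nhds <| (hQ.eventually (by simp)).mono fun u hu =>
      hu.differentiableAt one_ne_zero
  obtain ⟨δ, hδ, hsub⟩ := mem_nhdsGT_iff_exists_Ioo_subset.mp <|
    (hslope.eventually_const_lt hQ').and <|
      (hbracket.eventually_const_lt (by nlinarith : (0 : ℝ) < (1 + p) * deriv Q 0)).and <| hQdiff.and self_mem_nhdsWithin
  have hdiff : ∀ u ∈ Ioo 0 δ, HasDerivAt (fun u => Q u * u ^ p)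
      (u ^ p * (deriv Q u + p * (Q u / u))) u := fun u hu =>
    hasDerivAt_mul_rpow (hsub hu).2.2.2 (hsub hu).2.2.1.hasDerivAt
  refine ⟨δ, hδ, fun u hu => ?_, ?_⟩
  · obtain ⟨hQu, -, -, hu0⟩ := hsub hu
    exact mul_pos ((div_pos_iff_of_pos_right hu0).mp hQu) (Real.rpow_pos_of_pos hu0 p)
  · refine strictMonoOn_of_deriv_pos (convex_Ioo 0 δ)
      (fun u hu => (hdiff u hu).continuousAt.continuousWithinAt) fun u hu => ?_
    rw [interior_Ioo] at hu
    rw [(hdiff u hu).deriv]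
    exact mul_pos (Real.rpow_pos_of_pos hu.1 p) (hsub hu).2.1

noncomputable def coeffHProfile (γ u : ℝ) : ℝ :=
  2 * γ * (1 - 2 * u) / (1 + (3 * γ - 2) * u) *
    ((1 - u) ^ (γ - 1) * (1 - 2 * u) ^ (γ - 1) * (1 + (3 * γ - 2) * u) - (1 - u) ^ γ - 2 * γ * u)

theorem contDiffAt_coeffHProfile (γ : ℝ) : ContDiffAt ℝ 1 (coeffHProfile γ) 0 := by
  unfold coeffHProfile
  fun_prop (disch := norm_num)

theorem coeffHProfile_zero (γ : ℝ) : coeffHProfile γ 0 = 0 := by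
  simp [coeffHProfile]

theorem hasDerivAt_one_sub_mul_rpow (c a : ℝ) :
    HasDerivAt (fun u : ℝ => (1 - c * u) ^ a) (-(c * a)) 0 := by
  simpa using (((hasDerivAt_id (0 : ℝ)).const_mul c).const_sub 1).rpow_const (p := a)
    (by norm_num)

theorem hasDerivAt_coeffHProfile_zero (γ : ℝ) :
    HasDerivAt (coeffHProfile γ) (2 * γ * (1 - γ)) 0 := by
  have hA : HasDerivAt (fun u : ℝ => (1 - u) ^ (γ - 1)) (-(γ - 1)) 0 := by
    simpa using hasDerivAt_one_sub_mul_rpow 1 (γ - 1)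
  have hD : HasDerivAt (fun u : ℝ => (1 - u) ^ γ) (-γ) 0 := by
    simpa using hasDerivAt_one_sub_mul_rpow 1 γ
  have hlin : HasDerivAt (fun u : ℝ => 1 + (3 * γ - 2) * u) (3 * γ - 2) 0 := by
    simpa using ((hasDerivAt_id (0 : ℝ)).const_mul (3 * γ - 2)).const_add 1
  have hP : HasDerivAt (fun u : ℝ => (1 - u) ^ (γ - 1) * (1 - 2 * u) ^ (γ - 1) *
      (1 + (3 * γ - 2) * u) - (1 - u) ^ γ - 2 * γ * u) (1 - γ) 0 :=
    ((((hA.mul (hasDerivAt_one_sub_mul_rpow 2 (γ - 1))).mul hlin).sub hD).sub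
      ((hasDerivAt_id (0 : ℝ)).const_mul (2 * γ))).congr_deriv (by norm_num; ring)
  have hG : DifferentiableAt ℝ (fun u : ℝ => 2 * γ * (1 - 2 * u) / (1 + (3 * γ - 2) * u)) 0 := by
    fun_prop (disch := norm_num)
  exact (hG.hasDerivAt.mul hP).congr_deriv (by norm_num)

theorem sub_rpow_eq_rpow_mul_one_sub_mul_inv {x c : ℝ} (hx : 0 < x) (hc : c ≤ x) (a : ℝ) :
    (x - c) ^ a = x ^ a * (1 - c * x⁻¹) ^ a := by
  have hc' : 0 ≤ 1 - c * x⁻¹ := by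
    rwa [sub_nonneg, ← div_eq_mul_inv, div_le_one hx]
  rw [← Real.mul_rpow hx.le hc']
  congr 1
  field_simp

theorem coeffH_eq_coeffHProfile (γ : ℝ) {k : ℕ} (hk : 2 < k) :
    coeffH γ k = coeffHProfile γ (k : ℝ)⁻¹ * ((k : ℝ)⁻¹) ^ (1 - 2 * γ) := by
  unfold coeffH coeffHProfile
  have hx : (2 : ℝ) < k := by exact_mod_cast hk
  set x : ℝ := (k : ℝ)
  have hx0 : 0 < x := by linarith
  have hx0' := hx0.ne'
  have hfac : 2 * γ * (x - 2) / (x + 3 * γ - 2) =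
      2 * γ * (1 - 2 * x⁻¹) / (1 + (3 * γ - 2) * x⁻¹) := by
    rw [eq_comm, ← mul_div_mul_left _ _ hx0']
    congr 1
    · field_simp
    · field_simp; ring
  have hpow : (x⁻¹) ^ (1 - 2 * γ) = x ^ (2 * γ - 1) := by
    rw [Real.inv_rpow hx0.le, ← Real.rpow_neg hx0.le, neg_sub]
  have e1 : x ^ (γ - 1) * x ^ γ = x ^ (2 * γ - 1) := by
    rw [← Real.rpow_add hx0]; ring_nf
  have e2 : x ^ (γ - 1) * x ^ (γ - 1) * x = x ^ (2 * γ - 1) := by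
    rw [← Real.rpow_add hx0, ← Real.rpow_add_one hx0']; ring_nf
  have hx1 : (1 : ℝ) ≤ x := by linarith
  rw [hpow, hfac, sub_rpow_eq_rpow_mul_one_sub_mul_inv hx0 hx1,
    sub_rpow_eq_rpow_mul_one_sub_mul_inv hx0 hx1,
    sub_rpow_eq_rpow_mul_one_sub_mul_inv hx0 hx.le, one_mul]
  set G := 2 * γ * (1 - 2 * x⁻¹) / (1 + (3 * γ - 2) * x⁻¹)
  set A := (1 - x⁻¹) ^ (γ - 1)
  set B := (1 - 2 * x⁻¹) ^ (γ - 1)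
  set C := (1 - x⁻¹) ^ γ
  set L := 1 + (3 * γ - 2) * x⁻¹
  set P := x ^ (γ - 1) * x ^ (γ - 1)
  linear_combination (-G * C) * e1 + (G * A * B * L - 2 * γ * G * x⁻¹) * e2 +
    (2 * γ * G * P - G * A * B * P * (3 * γ - 2)) * mul_inv_cancel₀ hx0'

/-- For every γ ∈ (0,1) there exists an integer K₁ ≥ 2 (depending
only on γ) such that for all integers k ≥ K₁ the coefficient H_k satisfies
H_k ≥ 0 and H_{k+1} ≤ H_k. -/
theorem coeff_H_eventually_nonneg_nonincreasing
    (γ : ℝ) (hγ : γ ∈ Set.Ioo (0 : ℝ) 1) :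
    ∃ K₁ : ℕ, 2 ≤ K₁ ∧ ∀ k : ℕ, K₁ ≤ k →
      0 ≤ coeffH γ k ∧ coeffH γ (k + 1) ≤ coeffH γ k := by
  obtain ⟨hγ0, hγ1⟩ := hγ
  obtain ⟨δ, hδ, hpos, hmono⟩ := exists_strictMonoOn_mul_rpow (p := 1 - 2 * γ) (by linarith)
    (contDiffAt_coeffHProfile γ) (coeffHProfile_zero γ)
    (by rw [(hasDerivAt_coeffHProfile_zero γ).deriv]; nlinarith)
  obtain ⟨N, hN⟩ := exists_nat_gt δ⁻¹
  have hsmall : ∀ k : ℕ, N ≤ k → (k : ℝ)⁻¹ ∈ Ioo 0 δ := fun k hk => by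
    have hNk : δ⁻¹ < k := hN.trans_le (by exact_mod_cast hk)
    exact ⟨inv_pos.mpr ((inv_pos.mpr hδ).trans hNk), inv_lt_of_inv_lt₀ hδ hNk⟩
  refine ⟨max 3 N, by omega, fun k hk => ?_⟩
  rw [coeffH_eq_coeffHProfile γ (by omega : 2 < k + 1), coeffH_eq_coeffHProfile γ (by omega : 2 < k)]
  refine ⟨(hpos _ (hsmall k (by omega))).le,
    (hmono (hsmall (k + 1) (by omega)) (hsmall k (by omega)) ?_).le⟩
  have hk : (0 : ℝ) < k := by exact_mod_cast (by omega : 0 < k)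
  gcongr
  exact_mod_cast k.lt_succ_self
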